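/- arXiv:2111.04044 — 5 statements merged into one kernel-verified Lean document; each statement's English description precedes it below -/
import Mathlib

section
/- Let (X_i, Y_i), i ≥ 1, be i.i.d. uniform on Ω × [0,1], and let p, q be distributions on Ω. Define I_p = min{i : Y_i < p(X_i)} and I_q = min{i : Y_i < q(X_i)}. Then Pr[I_p = I_q] = (1 − d_TV(p,q))/(1 + d_TV(p,q)). -/
/-!
Both indices are read off the same trials, so `I_p = I_q = k + 1` exactly when trials `1, …, k`
lie above both graphs (outside the region under `max p q`) and trial `k + 1` lies under both
(under `min p q`). A trial lands under the graph of `c` with probability `∑ c / |Ω|`, and `I_p` is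
finite almost surely, so summing the geometric series over `k` gives
`Pr[I_p = I_q] = ∑ min p q / ∑ max p q`. Finally `∑ min p q = 1 - d_TV(p, q)` and
`∑ max p q = 1 + d_TV(p, q)`.
-/

open MeasureTheory

/-- The index of the first trial `i ≥ 1` accepted by the rejection-sampling scheme. -/
noncomputable def hitIdx {Ω α : Type*} (p : Ω → ℝ) (Z : ℕ → α → Ω × ℝ) (a : α) : ℕ :=
  sInf {i | 1 ≤ i ∧ (Z i a).2 < p (Z i a).1}

open Finset
open scoped ENNReal

def acceptRegion {Ω : Type*} (c : Ω → ℝ) : Set (Ω × ℝ) := {z | z.2 < c z.1}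

section HitIndex

variable {Ω α : Type*}

lemma acceptRegion_sup (p q : Ω → ℝ) :
    acceptRegion (p ⊔ q) = acceptRegion p ∪ acceptRegion q := by
  ext z; simp [acceptRegion]

lemma acceptRegion_inf (p q : Ω → ℝ) :
    acceptRegion (p ⊓ q) = acceptRegion p ∩ acceptRegion q := by
  ext z; simp [acceptRegion]

lemma hitIdx_eq_zero_iff (c : Ω → ℝ) (Z : ℕ → α → Ω × ℝ) (a : α) :
    hitIdx c Z a = 0 ↔ ∀ j, 1 ≤ j → Z j a ∉ acceptRegion c := by
  simp [hitIdx, Nat.sInf_eq_zero, acceptRegion, Set.eq_empty_iff_forall_notMem]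

lemma hitIdx_eq_succ_iff (c : Ω → ℝ) (Z : ℕ → α → Ω × ℝ) (a : α) (k : ℕ) :
    hitIdx c Z a = k + 1 ↔
      (∀ j ∈ Icc 1 k, Z j a ∉ acceptRegion c) ∧ Z (k + 1) a ∈ acceptRegion c := by
  change sInf {i | 1 ≤ i ∧ Z i a ∈ acceptRegion c} = k + 1 ↔ _
  constructor
  · intro h
    have hmem := h ▸ Nat.sInf_mem (Nat.nonempty_of_pos_sInf (by rw [h]; exact k.succ_pos))
    refine ⟨fun j hj hacc => ?_, hmem.2⟩
    have hlt : j < sInf {i | 1 ≤ i ∧ Z i a ∈ acceptRegion c} := by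
      rw [h]; exact Nat.lt_succ_of_le (mem_Icc.1 hj).2
    exact Nat.notMem_of_lt_sInf hlt ⟨(mem_Icc.1 hj).1, hacc⟩
  · rintro ⟨hrej, hacc⟩
    refine le_antisymm (Nat.sInf_le ⟨k.succ_pos, hacc⟩) (le_csInf ⟨k + 1, k.succ_pos, hacc⟩ ?_)
    rintro j ⟨hj, hjacc⟩
    by_contra! hlt
    exact hrej j (mem_Icc.2 ⟨hj, Nat.lt_succ_iff.1 hlt⟩) hjacc

lemma setOf_hitIdx_eq_succ_and_hitIdx_eq_succ (p q : Ω → ℝ) (Z : ℕ → α → Ω × ℝ) (k : ℕ) :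
    {a | hitIdx p Z a = k + 1 ∧ hitIdx q Z a = k + 1} =
      (⋂ j ∈ Icc 1 k, Z j ⁻¹' (acceptRegion (p ⊔ q))ᶜ) ∩ Z (k + 1) ⁻¹' acceptRegion (p ⊓ q) := by
  ext a
  simp only [Set.mem_ofPred_eq, hitIdx_eq_succ_iff, acceptRegion_sup, acceptRegion_inf,
    Set.mem_inter_iff, Set.mem_iInter, Set.mem_preimage, Set.mem_compl_iff, Set.mem_union]
  grind

end HitIndex

section IIDTrials

variable {α β : Type*} [MeasurableSpace α] [MeasurableSpace β] {μ : Measure α} {ν : Measure β}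
  {Z : ℕ → α → β}

lemma measure_iInter_preimage_Icc (hZ : ∀ i, Measurable (Z i))
    (hdist : ∀ i, 1 ≤ i → μ.map (Z i) = ν)
    (hindep : ∀ (s : Finset ℕ) (A : ℕ → Set β), (∀ i, MeasurableSet (A i)) →
      μ (⋂ i ∈ s, Z i ⁻¹' A i) = ∏ i ∈ s, μ (Z i ⁻¹' A i))
    (n : ℕ) {A : ℕ → Set β} (hA : ∀ i, MeasurableSet (A i)) :
    μ (⋂ j ∈ Icc 1 n, Z j ⁻¹' A j) = ∏ j ∈ Icc 1 n, ν (A j) := by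
  rw [hindep _ _ hA]
  refine prod_congr rfl fun j hj => ?_
  rw [← Measure.map_apply (hZ j) (hA j), hdist j (mem_Icc.1 hj).1]

lemma measure_rejectUntil_acceptAt (hZ : ∀ i, Measurable (Z i))
    (hdist : ∀ i, 1 ≤ i → μ.map (Z i) = ν)
    (hindep : ∀ (s : Finset ℕ) (A : ℕ → Set β), (∀ i, MeasurableSet (A i)) →
      μ (⋂ i ∈ s, Z i ⁻¹' A i) = ∏ i ∈ s, μ (Z i ⁻¹' A i))
    {A B : Set β} (hA : MeasurableSet A) (hB : MeasurableSet B) (k : ℕ) :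
    μ ((⋂ j ∈ Icc 1 k, Z j ⁻¹' B) ∩ Z (k + 1) ⁻¹' A) = ν B ^ k * ν A := by
  have h := measure_iInter_preimage_Icc hZ hdist hindep (k + 1)
    (A := fun j => if j ≤ k then B else A) fun j => by split_ifs <;> assumption
  rw [← insert_Icc_right_eq_Icc_add_one (Nat.le_add_left 1 k), set_biInter_insert,
    prod_insert (by simp), prod_congr rfl fun j hj => by rw [if_pos (mem_Icc.1 hj).2], prod_const,
    Nat.card_Icc, Nat.add_sub_cancel] at h
  simpa +contextual [Set.inter_comm, mul_comm] using h

lemma measure_setOf_forall_mem_eq_zero (hZ : ∀ i, Measurable (Z i))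
    (hdist : ∀ i, 1 ≤ i → μ.map (Z i) = ν)
    (hindep : ∀ (s : Finset ℕ) (A : ℕ → Set β), (∀ i, MeasurableSet (A i)) →
      μ (⋂ i ∈ s, Z i ⁻¹' A i) = ∏ i ∈ s, μ (Z i ⁻¹' A i))
    {B : Set β} (hB : MeasurableSet B) (hνB : ν B < 1) :
    μ {a | ∀ j, 1 ≤ j → Z j a ∈ B} = 0 := by
  have hle : ∀ m, μ {a | ∀ j, 1 ≤ j → Z j a ∈ B} ≤ ν B ^ m := fun m => calc
    _ ≤ μ (⋂ j ∈ Icc 1 m, Z j ⁻¹' B) :=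
      measure_mono fun a ha => by simpa using fun j hj _ => ha j hj
    _ = ν B ^ m := by
      rw [measure_iInter_preimage_Icc hZ hdist hindep m fun _ => hB, prod_const, Nat.card_Icc,
        Nat.add_sub_cancel]
  exact le_antisymm (ge_of_tendsto' (ENNReal.tendsto_pow_atTop_nhds_zero_of_lt_one hνB) hle)
    bot_le

end IIDTrials

lemma measure_setOf_eq_eq_tsum {α : Type*} [MeasurableSpace α] {μ : Measure α} {f g : α → ℕ}
    (hf : μ {a | f a = 0} = 0) (hmeas : ∀ k, MeasurableSet {a | f a = k + 1 ∧ g a = k + 1}) :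
    μ {a | f a = g a} = ∑' k, μ {a | f a = k + 1 ∧ g a = k + 1} := by
  have hdisj : Pairwise (Function.onFun Disjoint fun k => {a | f a = k + 1 ∧ g a = k + 1}) :=
    fun k l hkl => Set.disjoint_left.2 fun a hk hl => hkl (by simpa using hk.1.symm.trans hl.1)
  rw [← measure_iUnion hdisj hmeas]
  refine le_antisymm ?_ (measure_mono ?_)
  · calc μ {a | f a = g a} ≤ μ ({a | f a = 0} ∪ ⋃ k, {a | f a = k + 1 ∧ g a = k + 1}) :=
          measure_mono fun a (ha : f a = g a) => by
            rcases hfa : f a with _ | k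
            · exact Or.inl hfa
            · exact Or.inr (Set.mem_iUnion.2 ⟨k, hfa, ha ▸ hfa⟩)
      _ ≤ μ {a | f a = 0} + μ (⋃ k, {a | f a = k + 1 ∧ g a = k + 1}) := measure_union_le _ _
      _ = _ := by rw [hf, zero_add]
  · exact Set.iUnion_subset fun k a ha => ha.1.trans ha.2.symm

instance : IsProbabilityMeasure (volume.restrict (Set.Icc (0 : ℝ) 1)) :=
  ⟨by rw [Measure.restrict_apply_univ, Real.volume_Icc, sub_zero, ENNReal.ofReal_one]⟩

section UniformSquare

variable {Ω : Type*} [Fintype Ω] [MeasurableSpace Ω] [MeasurableSingletonClass Ω]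

lemma measurableSet_acceptRegion (c : Ω → ℝ) : MeasurableSet (acceptRegion c) :=
  measurableSet_lt measurable_snd ((measurable_of_countable c).comp measurable_fst)

lemma uniformOfFintype_prod_acceptRegion [Nonempty Ω] {c : Ω → ℝ} (h0 : ∀ x, 0 ≤ c x)
    (h1 : ∀ x, c x ≤ 1) :
    (PMF.uniformOfFintype Ω).toMeasure.prod (volume.restrict (Set.Icc (0 : ℝ) 1))
        (acceptRegion c) = ENNReal.ofReal (∑ x, c x) * (Fintype.card Ω : ℝ≥0∞)⁻¹ := by
  have hslice (x : Ω) :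
      volume.restrict (Set.Icc (0 : ℝ) 1) (Prod.mk x ⁻¹' acceptRegion c) = ENNReal.ofReal (c x) := by
    have : Prod.mk x ⁻¹' acceptRegion c ∩ Set.Icc 0 1 = Set.Ico 0 (c x) := by
      ext y
      simp only [acceptRegion, Set.mem_inter_iff, Set.mem_preimage, Set.mem_ofPred_eq,
        Set.mem_Icc, Set.mem_Ico]
      constructor
      · rintro ⟨hy, hy0, -⟩; exact ⟨hy0, hy⟩
      · rintro ⟨hy0, hy⟩; exact ⟨hy, hy0, hy.le.trans (h1 x)⟩
    rw [Measure.restrict_apply (measurable_prodMk_left (measurableSet_acceptRegion c)), this,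
      Real.volume_Ico, sub_zero]
  rw [Measure.prod_apply (measurableSet_acceptRegion c), lintegral_fintype]
  simp only [hslice, PMF.toMeasure_apply_singleton _ _ (measurableSet_singleton _),
    PMF.uniformOfFintype_apply]
  rw [← sum_mul, ← ENNReal.ofReal_sum_of_nonneg fun x _ => h0 x]

end UniformSquare

section TotalVariation

variable {Ω : Type*} [Fintype Ω] {p q : Ω → ℝ}

lemma le_one_of_sum_eq_one (h0 : ∀ x, 0 ≤ p x) (h1 : ∑ x, p x = 1) (x : Ω) : p x ≤ 1 :=
  h1 ▸ single_le_sum (fun y _ => h0 y) (mem_univ x)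

lemma sum_inf_eq_one_sub (hp : ∑ x, p x = 1) (hq : ∑ x, q x = 1) :
    ∑ x, (p ⊓ q) x = 1 - (1 / 2) * ∑ x, |p x - q x| := by
  have (x : Ω) : (p ⊓ q) x = (p x + q x - |p x - q x|) / 2 := by
    rw [Pi.inf_apply, min_def]; split_ifs <;> [rw [abs_of_nonpos]; rw [abs_of_pos]] <;> linarith
  simp only [this, ← sum_div, sum_sub_distrib, sum_add_distrib, hp, hq]
  ring_nf

lemma sum_sup_eq_one_add (hp : ∑ x, p x = 1) (hq : ∑ x, q x = 1) :
    ∑ x, (p ⊔ q) x = 1 + (1 / 2) * ∑ x, |p x - q x| := by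
  have (x : Ω) : (p ⊔ q) x = (p x + q x + |p x - q x|) / 2 := by
    rw [Pi.sup_apply, max_def]; split_ifs <;> [rw [abs_of_nonpos]; rw [abs_of_pos]] <;> linarith
  simp only [this, ← sum_div, sum_add_distrib, hp, hq]
  ring_nf

end TotalVariation

theorem stmt_7_general {Ω : Type*} [Fintype Ω] [Nonempty Ω] [MeasurableSpace Ω]
    [MeasurableSingletonClass Ω]
    {α : Type*} [MeasurableSpace α] (μ : Measure α)
    (p q : Ω → ℝ) (hp0 : ∀ x, 0 ≤ p x) (hp1 : ∑ x, p x = 1)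
    (hq0 : ∀ x, 0 ≤ q x) (hq1 : ∑ x, q x = 1)
    (Z : ℕ → α → Ω × ℝ) (hZmeas : ∀ i, Measurable (Z i))
    (hdist : ∀ i, 1 ≤ i → Measure.map (Z i) μ =
      (PMF.uniformOfFintype Ω).toMeasure.prod (volume.restrict (Set.Icc (0:ℝ) 1)))
    (hindep : ∀ (s : Finset ℕ) (A : ℕ → Set (Ω × ℝ)), (∀ i, MeasurableSet (A i)) →
      μ (⋂ i ∈ s, (Z i) ⁻¹' (A i)) = ∏ i ∈ s, μ ((Z i) ⁻¹' (A i))) :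
    μ {a | hitIdx p Z a = hitIdx q Z a}
      = ENNReal.ofReal
          ((1 - (1/2) * ∑ x, |p x - q x|) / (1 + (1/2) * ∑ x, |p x - q x|)) := by
  have hple := le_one_of_sum_eq_one hp0 hp1
  have hqle := le_one_of_sum_eq_one hq0 hq1
  have hmeas := measurableSet_acceptRegion (Ω := Ω)
  have hIp_finite : μ {a | hitIdx p Z a = 0} = 0 := by
    simp_rw [hitIdx_eq_zero_iff, ← Set.mem_compl_iff]
    refine measure_setOf_forall_mem_eq_zero hZmeas hdist hindep (hmeas p).compl ?_
    rw [prob_compl_eq_one_sub (hmeas p)]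
    refine ENNReal.sub_lt_self ENNReal.one_ne_top one_ne_zero ?_
    simp [uniformOfFintype_prod_acceptRegion hp0 hple, hp1]
  have hboth_meas (k : ℕ) : MeasurableSet {a | hitIdx p Z a = k + 1 ∧ hitIdx q Z a = k + 1} := by
    rw [setOf_hitIdx_eq_succ_and_hitIdx_eq_succ]
    exact (measurableSet_biInter _ fun j _ => hZmeas j (hmeas _).compl).inter
      (hZmeas _ (hmeas _))
  rw [measure_setOf_eq_eq_tsum hIp_finite hboth_meas]
  simp_rw [setOf_hitIdx_eq_succ_and_hitIdx_eq_succ,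
    measure_rejectUntil_acceptAt hZmeas hdist hindep (hmeas _) (hmeas _).compl]
  rw [ENNReal.tsum_mul_right, ENNReal.tsum_geometric, prob_compl_eq_one_sub (hmeas _),
    ENNReal.sub_sub_cancel ENNReal.one_ne_top prob_le_one, ← ENNReal.div_eq_inv_mul,
    uniformOfFintype_prod_acceptRegion (c := p ⊓ q) (fun x => le_min (hp0 x) (hq0 x))
      (fun x => min_le_of_left_le (hple x)),
    uniformOfFintype_prod_acceptRegion (c := p ⊔ q) (fun x => le_max_of_le_left (hp0 x))
      (fun x => max_le (hple x) (hqle x)),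
    ENNReal.mul_div_mul_right _ _ (by simp) (by simp), sum_inf_eq_one_sub hp1 hq1,
    sum_sup_eq_one_add hp1 hq1, ENNReal.ofReal_div_of_pos (by positivity)]

theorem stmt_7 {Ω : Type*} [Fintype Ω] [Nonempty Ω] [MeasurableSpace Ω]
    [MeasurableSingletonClass Ω]
    {α : Type*} [MeasurableSpace α] (μ : Measure α) [IsProbabilityMeasure μ]
    (p q : Ω → ℝ) (hp0 : ∀ x, 0 ≤ p x) (hp1 : ∑ x, p x = 1)
    (hq0 : ∀ x, 0 ≤ q x) (hq1 : ∑ x, q x = 1)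
    (Z : ℕ → α → Ω × ℝ) (hZmeas : ∀ i, Measurable (Z i))
    (hdist : ∀ i, 1 ≤ i → Measure.map (Z i) μ =
      (PMF.uniformOfFintype Ω).toMeasure.prod (volume.restrict (Set.Icc (0:ℝ) 1)))
    (hindep : ∀ (s : Finset ℕ) (A : ℕ → Set (Ω × ℝ)), (∀ i, MeasurableSet (A i)) →
      μ (⋂ i ∈ s, (Z i) ⁻¹' (A i)) = ∏ i ∈ s, μ ((Z i) ⁻¹' (A i))) :
    μ {a | hitIdx p Z a = hitIdx q Z a}
      = ENNReal.ofReal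
          ((1 - (1/2) * ∑ x, |p x - q x|) / (1 + (1/2) * ∑ x, |p x - q x|)) :=
  stmt_7_general μ p q hp0 hp1 hq0 hq1 Z hZmeas hdist hindep
end

section
/- Let k ≥ 1 and Ω ⊇ {1,…,k+1}. For each 1 ≤ i ≤ k+1, let S_i = {1,…,k+1} \ {i}. Then for any choice (x_1, …, x_{k+1}) with x_i ∈ S_i for all i, the number of pairs 1 ≤ i < j ≤ k+1 with x_i ≠ x_j is at least k. -/
theorem stmt_9 (k : ℕ) (hk : 1 ≤ k) (x : Fin (k+1) → Fin (k+1)) (hx : ∀ i, x i ≠ i) :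
    k ≤ (Finset.univ.filter
          (fun ij : Fin (k+1) × Fin (k+1) => ij.1 < ij.2 ∧ x ij.1 ≠ x ij.2)).card := by
  classical
  set a := x 0 with ha
  have ha0 : a ≠ 0 := hx 0
  have ha0' : (0 : Fin (k+1)) < a := Fin.pos_of_ne_zero ha0
  set f : Fin (k+1) → Fin (k+1) × Fin (k+1) :=
    fun j => if x j = a ∧ j ≠ a then (min j a, max j a) else (0, j) with hf
  have hcard : ((Finset.univ.erase (0 : Fin (k+1)))).card = k := by
    simp [Finset.card_erase_of_mem]
  have hmaps : ∀ j ∈ Finset.univ.erase (0 : Fin (k+1)),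
      f j ∈ Finset.univ.filter
        (fun ij : Fin (k+1) × Fin (k+1) => ij.1 < ij.2 ∧ x ij.1 ≠ x ij.2) := by
    intro j hj
    have hj0 : j ≠ 0 := (Finset.mem_erase.mp hj).1
    have hj0' : (0 : Fin (k+1)) < j := Fin.pos_of_ne_zero hj0
    simp only [hf, Finset.mem_filter, Finset.mem_univ, true_and]
    by_cases h : x j = a ∧ j ≠ a
    · rw [if_pos h]
      rcases lt_or_gt_of_ne h.2 with hlt | hgt
      · rw [min_eq_left hlt.le, max_eq_right hlt.le]
        refine ⟨hlt, ?_⟩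
        rw [h.1]
        exact fun e => hx a e.symm
      · rw [min_eq_right hgt.le, max_eq_left hgt.le]
        refine ⟨hgt, ?_⟩
        rw [h.1]
        exact hx a
    · rw [if_neg h]
      refine ⟨hj0', ?_⟩
      rw [← ha]
      push_neg at h
      exact fun e => hx j (e.symm.trans (h e.symm).symm)
  have hinj : Set.InjOn f (Finset.univ.erase (0 : Fin (k+1))) := by
    intro j hj j' hj' heq
    have hj0 : j ≠ 0 := (Finset.mem_erase.mp hj).1
    have hj0' : (0 : Fin (k+1)) < j := Fin.pos_of_ne_zero hj0
    have hj'0 : j' ≠ 0 := (Finset.mem_erase.mp hj').1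
    have hj'0' : (0 : Fin (k+1)) < j' := Fin.pos_of_ne_zero hj'0
    simp only [hf] at heq
    by_cases h : x j = a ∧ j ≠ a <;> by_cases h' : x j' = a ∧ j' ≠ a
    · rw [if_pos h, if_pos h'] at heq
      have h1 := congrArg Prod.fst heq
      have h2 := congrArg Prod.snd heq
      simp only at h1 h2
      rcases lt_or_gt_of_ne h.2 with hlt | hgt <;>
        rcases lt_or_gt_of_ne h'.2 with hlt' | hgt'
      · rw [min_eq_left hlt.le, min_eq_left hlt'.le] at h1; exact h1
      · rw [min_eq_left hlt.le, min_eq_right hgt'.le] at h1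
        exact absurd h1 h.2
      · rw [min_eq_right hgt.le, min_eq_left hlt'.le] at h1
        exact absurd h1.symm h'.2
      · rw [max_eq_left hgt.le, max_eq_left hgt'.le] at h2; exact h2
    · rw [if_pos h, if_neg h'] at heq
      have h1 := congrArg Prod.fst heq
      simp only at h1
      have : (0 : Fin (k+1)) < min j a := lt_min hj0' ha0'
      rw [h1] at this
      exact absurd this (lt_irrefl 0)
    · rw [if_neg h, if_pos h'] at heq
      have h1 := congrArg Prod.fst heq
      simp only at h1
      have : (0 : Fin (k+1)) < min j' a := lt_min hj'0' ha0'
      rw [← h1] at this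
      exact absurd this (lt_irrefl 0)
    · rw [if_neg h, if_neg h'] at heq
      exact congrArg Prod.snd heq
  calc k = _ := hcard.symm
    _ ≤ _ := Finset.card_le_card_of_injOn f hmaps hinj
end

section
/- For any universal coupling f : Δ(Ω) × [0,1] → Ω on a finite sample space Ω and any integer k with 1 ≤ k < |Ω|, there exist distributions p, q on Ω with d_TV(p,q) = 1/k such that Pr_{R~Unif[0,1]}[f(p,R) = f(q,R)] ≤ (k−1)/(k+1) = (1 − d_TV(p,q))/(1 + d_TV(p,q)). -/
/-!
Embed `k + 1` points `T ⊆ Ω` and let `μ a` be uniform on `T \ {a}`; distinct `μ a`, `μ b` are at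
total variation distance `1/k`. For almost every `r`, each `f (μ a) r` lies in `T \ {a}`, so
`a ↦ f (μ a) r` is a fixed-point-free self-map of `T`. Its fibres have sizes `n_y ≤ k` with
`∑ n_y = k + 1`, hence `∑ n_y² ≤ k² + 1`, i.e. at most `k² - k` of the `k² + k` ordered pairs
`a ≠ b` collide. Integrating over `r`, the agreement probabilities of all these pairs sum to at
most `k² - k`, so one of them is at most `(k - 1)/(k + 1)`.
-/

open Finset MeasureTheory

section Combinatorics

variable {α β ι : Type*}

theorem card_filter_product_eq_sum_sq [DecidableEq β] {s : Finset α} {t : Finset β} {φ : α → β}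
    (hφ : Set.MapsTo φ s t) :
    #{p ∈ s ×ˢ s | φ p.1 = φ p.2} = ∑ y ∈ t, #{a ∈ s | φ a = y} ^ 2 := by
  rw [card_eq_sum_card_fiberwise (f := fun p => φ p.1) (t := t)
    fun p hp => hφ (mem_product.1 (mem_filter.1 hp).1).1]
  refine sum_congr rfl fun y _ => ?_
  rw [sq, ← card_product, filter_filter]
  congr 1; ext p; simp only [mem_filter, mem_product]
  constructor
  · rintro ⟨⟨h1, h2⟩, h12, rfl⟩; exact ⟨⟨h1, rfl⟩, h2, h12.symm⟩
  · rintro ⟨⟨h1, rfl⟩, h2, h12⟩; exact ⟨⟨h1, h2⟩, h12.symm, rfl⟩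

theorem sum_sq_le_sq_add_one {t : Finset ι} {n : ι → ℕ} {m : ℕ}
    (hsum : ∑ i ∈ t, n i = m + 1) (hle : ∀ i ∈ t, n i ≤ m) :
    ∑ i ∈ t, n i ^ 2 ≤ m ^ 2 + 1 := by
  classical
  obtain ⟨i₀, hi₀, hpos⟩ : ∃ i ∈ t, n i ≠ 0 := exists_ne_zero_of_sum_ne_zero (by omega)
  have hsplit : n i₀ + ∑ i ∈ t.erase i₀, n i = m + 1 := by rw [add_sum_erase _ _ hi₀, hsum]
  have hsq : ∑ i ∈ t.erase i₀, n i ^ 2 ≤ (∑ i ∈ t.erase i₀, n i) ^ 2 :=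
    sum_sq_le_sq_sum_of_nonneg fun _ _ => Nat.zero_le _
  have hone : 1 ≤ n i₀ := Nat.one_le_iff_ne_zero.2 hpos
  have hm := hle i₀ hi₀
  rw [← add_sum_erase _ _ hi₀]
  generalize ∑ i ∈ t.erase i₀, n i = r at hsplit hsq
  generalize n i₀ = a at *
  nlinarith [Nat.mul_le_mul (Nat.sub_le_sub_right hm 1) (Nat.sub_le_sub_left hone m)]

theorem card_filter_offDiag_le_of_forall_mem_erase [DecidableEq α] {s : Finset α} {φ : α → α}
    {m : ℕ} (hs : #s = m + 1) (hφ : ∀ a ∈ s, φ a ∈ s.erase a) :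
    #{p ∈ s.offDiag | φ p.1 = φ p.2} ≤ m * (m - 1) := by
  have hfiber : ∀ y ∈ s, #{a ∈ s | φ a = y} ≤ m := fun y hy => by
    calc #{a ∈ s | φ a = y} ≤ #(s.erase y) :=
          card_le_card fun a ha => by
            obtain ⟨has, rfl⟩ := mem_filter.1 ha
            exact mem_erase.2 ⟨(ne_of_mem_erase (hφ a has)).symm, has⟩
      _ = m := by rw [card_erase_of_mem hy, hs]; rfl
  have hsum : ∑ y ∈ s, #{a ∈ s | φ a = y} = m + 1 :=
    hs ▸ (card_eq_sum_card_fiberwise fun a ha => mem_of_mem_erase (hφ a ha)).symm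
  have hall : #{p ∈ s ×ˢ s | φ p.1 = φ p.2} ≤ m ^ 2 + 1 :=
    card_filter_product_eq_sum_sq (fun a ha => mem_of_mem_erase (hφ a ha)) ▸
      sum_sq_le_sq_add_one hsum hfiber
  have hdiag : #{p ∈ s ×ˢ s | φ p.1 = φ p.2} = #{p ∈ s.offDiag | φ p.1 = φ p.2} + (m + 1) := by
    rw [← diag_union_offDiag, filter_union, card_union_of_disjoint
      (disjoint_filter_filter (disjoint_diag_offDiag s)),
      filter_true_of_mem (s := s.diag) fun p hp => by rw [(mem_diag.1 hp).2], diag_card, hs,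
      add_comm]
  rw [Nat.mul_sub_one, ← sq]
  omega

end Combinatorics

section UniformDistribution

variable {Ω : Type*} [DecidableEq Ω]

noncomputable def uniformProb (s : Finset Ω) (x : Ω) : ℝ :=
  if x ∈ s then (#s : ℝ)⁻¹ else 0

theorem uniformProb_nonneg (s : Finset Ω) (x : Ω) : 0 ≤ uniformProb s x := by
  unfold uniformProb; split_ifs <;> positivity

theorem sum_uniformProb [Fintype Ω] {s : Finset Ω} (hs : s.Nonempty) :
    ∑ x, uniformProb s x = 1 := by
  simp only [uniformProb, sum_ite_mem, univ_inter, sum_const, nsmul_eq_mul]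
  exact mul_inv_cancel₀ (Nat.cast_ne_zero.2 hs.card_pos.ne')

theorem sum_uniformProb_erase [Fintype Ω] {s : Finset Ω} (hs : s.Nontrivial) (a : Ω) :
    ∑ x, uniformProb (s.erase a) x = 1 :=
  sum_uniformProb hs.erase_nonempty

theorem mem_of_uniformProb_ne_zero {s : Finset Ω} {x : Ω} (hx : uniformProb s x ≠ 0) :
    x ∈ s := by
  by_contra h; exact hx (if_neg h)

theorem abs_uniformProb_erase_sub {s : Finset Ω} {n : ℕ} (hs : #s = n + 1) {a b : Ω}
    (ha : a ∈ s) (hb : b ∈ s) (hab : a ≠ b) (x : Ω) :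
    |uniformProb (s.erase a) x - uniformProb (s.erase b) x|
      = (if x = a then (n : ℝ)⁻¹ else 0) + (if x = b then (n : ℝ)⁻¹ else 0) := by
  simp only [uniformProb, card_erase_of_mem ha, card_erase_of_mem hb, hs, mem_erase,
    Nat.add_sub_cancel]
  by_cases hxa : x = a <;> by_cases hxb : x = b <;> simp_all

theorem sum_abs_uniformProb_erase_sub [Fintype Ω] {s : Finset Ω} {n : ℕ} (hs : #s = n + 1)
    {a b : Ω} (ha : a ∈ s) (hb : b ∈ s) (hab : a ≠ b) :
    ∑ x, |uniformProb (s.erase a) x - uniformProb (s.erase b) x| = 2 / n := by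
  simp only [abs_uniformProb_erase_sub hs ha hb hab, sum_add_distrib, sum_ite_eq', mem_univ,
    if_true]
  ring

end UniformDistribution

section Measure

variable {X : Type*} [MeasurableSpace X] {ν : Measure X}

open Classical in
theorem sum_measure_le_of_ae_card_le {ι : Type*} {s : Finset ι} {A : ι → Set X}
    (hA : ∀ i ∈ s, MeasurableSet (A i)) {N : ℕ} (hN : ∀ᵐ x ∂ν, #{i ∈ s | x ∈ A i} ≤ N) :
    ∑ i ∈ s, ν (A i) ≤ N * ν Set.univ := by
  calc ∑ i ∈ s, ν (A i) = ∑ i ∈ s, ∫⁻ x, (A i).indicator 1 x ∂ν :=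
        sum_congr rfl fun i hi => (lintegral_indicator_one (hA i hi)).symm
    _ = ∫⁻ x, (#{i ∈ s | x ∈ A i} : ENNReal) ∂ν := by
        rw [← lintegral_finsetSum _ fun i hi => measurable_one.indicator (hA i hi)]
        simp only [natCast_card_filter, Set.indicator_apply, Pi.one_apply]
    _ ≤ ∫⁻ _, (N : ENNReal) ∂ν := lintegral_mono_ae (hN.mono fun x hx => by exact_mod_cast hx)
    _ = N * ν Set.univ := lintegral_const _

theorem ae_ne_zero_of_measure_fiber_eq_ofReal {Ω : Type*} [Countable Ω] {g : X → Ω} {p : Ω → ℝ}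
    (hg : ∀ x, ν {r | g r = x} = ENNReal.ofReal (p x)) : ∀ᵐ r ∂ν, p (g r) ≠ 0 := by
  rw [ae_iff]
  simp only [ne_eq, not_not]
  refine (measure_preimage_eq_zero_iff_of_countable (f := g) (s := {x | p x = 0})
    (Set.to_countable _)).2 fun x hx => ?_
  rw [show g ⁻¹' {x} = {r | g r = x} from rfl, hg, hx, ENNReal.ofReal_zero]

end Measure

section UniversalCoupling

variable {X Ω : Type*} [MeasurableSpace X] [Fintype Ω] [DecidableEq Ω]

def IsUniversalCoupling (ν : Measure X) (f : (Ω → ℝ) → X → Ω) : Prop :=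
  ∀ p : Ω → ℝ, (∀ x, 0 ≤ p x) → (∑ x, p x = 1) → ∀ x : Ω,
    ν {r | f p r = x} = ENNReal.ofReal (p x)

variable {ν : Measure X} {f : (Ω → ℝ) → X → Ω}

theorem IsUniversalCoupling.ae_mem_erase (hf : IsUniversalCoupling ν f) {T : Finset Ω}
    (hT : T.Nontrivial) : ∀ᵐ r ∂ν, ∀ a ∈ T, f (uniformProb (T.erase a)) r ∈ T.erase a := by
  refine ae_all_iff.2 fun a => ?_
  filter_upwards [ae_ne_zero_of_measure_fiber_eq_ofReal
    (hf _ (uniformProb_nonneg _) (sum_uniformProb_erase hT a))] with r hr _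
  exact mem_of_uniformProb_ne_zero hr

theorem IsUniversalCoupling.sum_measure_agreement_le [MeasurableSpace Ω]
    [MeasurableSingletonClass Ω] (hf : IsUniversalCoupling ν f) (hfm : ∀ p, Measurable (f p))
    {T : Finset Ω} {k : ℕ} (hT : #T = k + 1) (hk : 1 ≤ k) :
    ∑ p ∈ T.offDiag, ν {r | f (uniformProb (T.erase p.1)) r = f (uniformProb (T.erase p.2)) r}
      ≤ (k * (k - 1) : ℕ) * ν Set.univ := by
  refine sum_measure_le_of_ae_card_le (fun p _ => measurableSet_eq_fun (hfm _) (hfm _)) ?_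
  filter_upwards [hf.ae_mem_erase (T := T) (one_lt_card_iff_nontrivial.1 (by omega))] with r hr
  convert card_filter_offDiag_le_of_forall_mem_erase
    (φ := fun a => f (uniformProb (T.erase a)) r) hT hr

theorem IsUniversalCoupling.exists_measure_agreement_le [MeasurableSpace Ω]
    [MeasurableSingletonClass Ω] [IsProbabilityMeasure ν] (hf : IsUniversalCoupling ν f)
    (hfm : ∀ p, Measurable (f p)) {T : Finset Ω} {k : ℕ} (hT : #T = k + 1) (hk : 1 ≤ k) :
    ∃ a ∈ T, ∃ b ∈ T, a ≠ b ∧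
      ν {r | f (uniformProb (T.erase a)) r = f (uniformProb (T.erase b)) r}
        ≤ ENNReal.ofReal (((k : ℝ) - 1) / ((k : ℝ) + 1)) := by
  have hoff : #T.offDiag = (k + 1) * k := by
    rw [offDiag_card, hT, ← Nat.mul_sub_one, Nat.add_sub_cancel]
  have hbound : ((k * (k - 1) : ℕ) : ENNReal) * ν Set.univ
      = ∑ p ∈ T.offDiag, ENNReal.ofReal (((k : ℝ) - 1) / ((k : ℝ) + 1)) := by
    rw [measure_univ, mul_one, sum_const, hoff, nsmul_eq_mul, ← ENNReal.ofReal_natCast,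
      ← ENNReal.ofReal_natCast, ← ENNReal.ofReal_mul (by positivity)]
    congr 1
    push_cast [Nat.cast_sub hk]
    field_simp
  obtain ⟨⟨a, b⟩, hab, hle⟩ :=
    ENNReal.exists_le_of_sum_le (card_pos.1 (by rw [hoff]; positivity))
      ((hf.sum_measure_agreement_le hfm hT hk).trans hbound.le)
  obtain ⟨ha, hb, hne⟩ := mem_offDiag.1 hab
  exact ⟨a, ha, b, hb, hne, hle⟩

end UniversalCoupling

theorem stmt_11 {Ω : Type*} [Fintype Ω] [DecidableEq Ω] [MeasurableSpace Ω]
    [MeasurableSingletonClass Ω]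
    (f : (Ω → ℝ) → ℝ → Ω) (hfm : ∀ p, Measurable (f p))
    (huniv : ∀ p : Ω → ℝ, (∀ x, 0 ≤ p x) → (∑ x, p x = 1) → ∀ x : Ω,
      (volume.restrict (Set.Icc (0:ℝ) 1)) {r | f p r = x} = ENNReal.ofReal (p x))
    (k : ℕ) (hk1 : 1 ≤ k) (hk2 : k < Fintype.card Ω) :
    ∃ p q : Ω → ℝ, (∀ x, 0 ≤ p x) ∧ (∑ x, p x = 1) ∧ (∀ x, 0 ≤ q x) ∧ (∑ x, q x = 1) ∧
      (1/2) * ∑ x, |p x - q x| = 1/(k:ℝ) ∧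
      (volume.restrict (Set.Icc (0:ℝ) 1)) {r | f p r = f q r}
        ≤ ENNReal.ofReal (((k:ℝ) - 1)/((k:ℝ) + 1)) := by
  obtain ⟨T, -, hT⟩ := exists_subset_card_eq (s := (univ : Finset Ω)) (n := k + 1) hk2
  have hTnt : T.Nontrivial := one_lt_card_iff_nontrivial.1 (by omega)
  have : IsProbabilityMeasure (volume.restrict (Set.Icc (0:ℝ) 1)) := ⟨by simp⟩
  obtain ⟨a, ha, b, hb, hab, hle⟩ :=
    IsUniversalCoupling.exists_measure_agreement_le huniv hfm hT hk1
  refine ⟨_, _, uniformProb_nonneg _, sum_uniformProb_erase hTnt a, uniformProb_nonneg _,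
    sum_uniformProb_erase hTnt b, ?_, hle⟩
  rw [sum_abs_uniformProb_erase_sub hT ha hb hab]
  ring
end

section
/- Let f : Δ(Ω) × [0,1] → Ω be any function (with R uniform on [0,1]), and μ_1, …, μ_{k+1} distributions such that f(μ_i, R) ∈ S_i always, where S_i = {1,…,k+1}\{i}. Then Σ_{1≤i<j≤k+1} Pr[f(μ_i,R) ≠ f(μ_j,R)] ≥ k, and hence by averaging there exist indices i < j with Pr[f(μ_i,R) ≠ f(μ_j,R)] ≥ 2/(k+1). -/
/-!
Fix `r`. The graph on the indices joining `i` and `j` whenever `g i r ≠ g j r` is complete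
multipartite, and no part is everything: if `g i r = e j`, then `j` lies outside the part of `i`
since `g j r ≠ e j`. Hence it is connected, so it has at least `k` edges. Integrating this pointwise
bound over `[0, 1]` gives the first inequality, and averaging over the `(k + 1).choose 2` pairs
gives the second.
-/

open MeasureTheory Finset

namespace SimpleGraph

variable {V α : Type*}

lemma preconnected_comap_top {x : V → α} (hx : ∀ i, ∃ m, x m ≠ x i) :
    ((⊤ : SimpleGraph α).comap x).Preconnected := by
  intro i j
  by_cases hij : x i = x j
  · obtain ⟨m, hm⟩ := hx i
    have him : ((⊤ : SimpleGraph α).comap x).Adj i m := by simpa using hm.symm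
    have hmj : ((⊤ : SimpleGraph α).comap x).Adj m j := by simpa [← hij] using hm
    exact him.reachable.trans hmj.reachable
  · exact Adj.reachable (by simpa using hij)

lemma card_edgeFinset_eq_card_filter_lt [Fintype V] [LinearOrder V] (G : SimpleGraph V)
    [DecidableRel G.Adj] :
    #G.edgeFinset = #{p : V × V | p.1 < p.2 ∧ G.Adj p.1 p.2} := by
  symm
  refine card_nbij (fun p => s(p.1, p.2)) ?_ ?_ ?_
  · intro p hp
    simp_all
  · rintro ⟨a, b⟩ hab ⟨c, d⟩ hcd h
    simp only [coe_filter, Set.mem_ofPred_eq, mem_univ, true_and] at hab hcd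
    rcases Sym2.eq_iff.mp h with h | ⟨rfl, rfl⟩
    · simp_all
    · exact absurd (hab.1.trans hcd.1) (lt_irrefl _)
  · intro e he
    induction e using Sym2.ind with
    | h a b =>
      have hab : G.Adj a b := by simpa using he
      rcases lt_or_gt_of_ne hab.ne with h | h
      · exact ⟨(a, b), by simp [h, hab], rfl⟩
      · exact ⟨(b, a), by simp [h, hab.symm], Sym2.eq_swap⟩

lemma card_filter_fst_lt_snd [Fintype V] [LinearOrder V] :
    #{p : V × V | p.1 < p.2} = (Fintype.card V).choose 2 := by
  have := ((⊤ : SimpleGraph V).card_edgeFinset_eq_card_filter_lt).symm.trans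
    card_edgeFinset_top_eq_card_choose_two
  simpa only [top_adj, and_iff_left_of_imp ne_of_lt] using this

end SimpleGraph

theorem card_le_card_pairs_ne_add_one {V α : Type*} [Fintype V] [LinearOrder V] [Nonempty V]
    [DecidableEq α] (x : V → α) (hx : ∀ i, ∃ m, x m ≠ x i) :
    Fintype.card V ≤ #{p : V × V | p.1 < p.2 ∧ x p.1 ≠ x p.2} + 1 := by
  have hconn : ((⊤ : SimpleGraph α).comap x).Connected :=
    ⟨SimpleGraph.preconnected_comap_top hx⟩
  have hedges := SimpleGraph.card_edgeFinset_eq_card_filter_lt ((⊤ : SimpleGraph α).comap x)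
  simp only [SimpleGraph.comap_adj, SimpleGraph.top_adj] at hedges
  rw [← hedges, SimpleGraph.edgeFinset_card, ← Nat.card_eq_fintype_card, ← Nat.card_eq_fintype_card]
  exact hconn.card_vert_le_card_edgeSet_add_one

open scoped Classical in
/-- Passing to measurable hulls removes any measurability assumption on the `A i`. -/
theorem le_sum_measure_of_le_card_filter_mem {X ι : Type*} [MeasurableSpace X] (μ : Measure X)
    (s : Finset ι) (A : ι → Set X) (c : ℕ) (h : ∀ x, c ≤ #{i ∈ s | x ∈ A i}) :
    c * μ Set.univ ≤ ∑ i ∈ s, μ (A i) := by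
  have hA : ∀ i, MeasurableSet (toMeasurable μ (A i)) := fun i => measurableSet_toMeasurable _ _
  calc (c : ENNReal) * μ Set.univ = ∫⁻ _, (c : ENNReal) ∂μ := (lintegral_const _).symm
    _ ≤ ∫⁻ x, ∑ i ∈ s, (toMeasurable μ (A i)).indicator 1 x ∂μ := by
      refine lintegral_mono fun x => ?_
      calc (c : ENNReal) ≤ #{i ∈ s | x ∈ A i} := by exact_mod_cast h x
        _ = ∑ i ∈ s, (A i).indicator 1 x := by
          simp only [card_filter, Set.indicator_apply, Pi.one_apply]
          push_cast
          rfl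
        _ ≤ _ := sum_le_sum fun i _ =>
          Set.indicator_le_indicator_of_subset (subset_toMeasurable _ _) (by simp) x
    _ = ∑ i ∈ s, μ (A i) := by
      rw [lintegral_finsetSum _ fun i _ => measurable_one.indicator (hA i)]
      simp [lintegral_indicator_one (hA _), measure_toMeasurable]

theorem stmt_12_general {Ω : Type*}
    (k : ℕ) (hk : 1 ≤ k) (e : Fin (k+1) ↪ Ω)
    (g : Fin (k+1) → ℝ → Ω)
    (hrange : ∀ i r, ∃ j : Fin (k+1), j ≠ i ∧ g i r = e j) :
    (k : ENNReal) ≤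
      ∑ ij ∈ Finset.univ.filter
          (fun ij : Fin (k+1) × Fin (k+1) => ij.1 < ij.2),
        (volume.restrict (Set.Icc (0:ℝ) 1)) {r | g ij.1 r ≠ g ij.2 r} ∧
    ∃ i j : Fin (k+1), i < j ∧
      ENNReal.ofReal (2/((k:ℝ) + 1)) ≤
        (volume.restrict (Set.Icc (0:ℝ) 1)) {r | g i r ≠ g j r} := by
  classical
  set μ := volume.restrict (Set.Icc (0:ℝ) 1)
  set P := univ.filter (fun ij : Fin (k+1) × Fin (k+1) => ij.1 < ij.2)
  have hμ : μ Set.univ = 1 := by simp [μ]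
  have hfiber : ∀ r i, ∃ m, g m r ≠ g i r := fun r i => by
    obtain ⟨j, -, hij⟩ := hrange i r
    obtain ⟨j', hj', hjj'⟩ := hrange j r
    exact ⟨j, by rw [hij, hjj']; exact e.injective.ne hj'⟩
  have hsum : (k : ENNReal) ≤ ∑ ij ∈ P, μ {r | g ij.1 r ≠ g ij.2 r} := by
    simpa [hμ] using le_sum_measure_of_le_card_filter_mem μ P _ k fun r => by
      simpa [P, filter_filter] using card_le_card_pairs_ne_add_one (fun i => g i r) (hfiber r)
  refine ⟨hsum, ?_⟩
  have hP : #P = (k + 1).choose 2 := by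
    simpa using SimpleGraph.card_filter_fst_lt_snd (V := Fin (k + 1))
  have hPne : P.Nonempty := ⟨(0, Fin.last k), by simp [P, Fin.pos_iff_ne_zero]; omega⟩
  have hcard : ((k + 1).choose 2 : ENNReal) * ENNReal.ofReal (2 / ((k:ℝ) + 1)) = k := by
    rw [← ENNReal.ofReal_natCast, ← ENNReal.ofReal_mul (by positivity), Nat.cast_choose_two,
      ← ENNReal.ofReal_natCast]
    congr 1
    field_simp
    push_cast
    ring
  obtain ⟨ij, hij, hle⟩ := ENNReal.exists_le_of_sum_le hPne
    (f := fun _ => ENNReal.ofReal (2 / ((k:ℝ) + 1))) (by simpa [hP, hcard] using hsum)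
  exact ⟨ij.1, ij.2, (mem_filter.mp hij).2, hle⟩

theorem stmt_12 {Ω : Type*} [MeasurableSpace Ω] [MeasurableSingletonClass Ω]
    (k : ℕ) (hk : 1 ≤ k) (e : Fin (k+1) ↪ Ω)
    (g : Fin (k+1) → ℝ → Ω) (hg : ∀ i, Measurable (g i))
    (hrange : ∀ i r, ∃ j : Fin (k+1), j ≠ i ∧ g i r = e j) :
    (k : ENNReal) ≤
      ∑ ij ∈ Finset.univ.filter
          (fun ij : Fin (k+1) × Fin (k+1) => ij.1 < ij.2),
        (volume.restrict (Set.Icc (0:ℝ) 1)) {r | g ij.1 r ≠ g ij.2 r} ∧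
    ∃ i j : Fin (k+1), i < j ∧
      ENNReal.ofReal (2/((k:ℝ) + 1)) ≤
        (volume.restrict (Set.Icc (0:ℝ) 1)) {r | g i r ≠ g j r} :=
  stmt_12_general k hk e g hrange
end

section
/- Let V_1,…,V_m be i.i.d. uniform elements of a finite set V of size n, and let A : V × V → ℝ_{≥0} be a nonnegative matrix with ℓ_p-operator norm at most B (for some p ∈ [1,∞]). Then for any fixed indices 1 ≤ j_1 < ⋯ < j_ℓ ≤ m, the expectation E[∏_{i=1}^{ℓ−1} A(V_{j_i}, V_{j_{i+1}})] is at most (B/n)^{ℓ−1}. -/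
open MeasureTheory
open scoped ENNReal

/-- The `ℓ_p` norm of a finitely indexed real vector. -/
noncomputable def vecNorm (p : ℝ≥0∞) [Fact (1 ≤ p)] {ι : Type*} [Fintype ι]
    (v : ι → ℝ) : ℝ :=
  ‖(WithLp.equiv p (ι → ℝ)).symm v‖

/-- The `ℓ_p`-induced operator norm of a matrix: `sup_{v ≠ 0} ‖Av‖_p / ‖v‖_p`. -/
noncomputable def matOpNorm (p : ℝ≥0∞) [Fact (1 ≤ p)] {ι : Type*} [Fintype ι]
    (A : Matrix ι ι ℝ) : ℝ :=
  sSup {c | ∃ v : ι → ℝ, v ≠ 0 ∧ c = vecNorm p (A.mulVec v) / vecNorm p v}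

/-!
By independence and injectivity of `j`, the law of `(X (j 0), …, X (j ℓ))` is uniform on
`V^(ℓ+1)`, so the expectation is `n^{-(ℓ+1)}` times the sum over all walks of length `ℓ` of the
product of the entries of `A` along the walk, i.e. `n^{-(ℓ+1)} · 𝟏ᵀ A^ℓ 𝟏`. Since `A ≥ 0`, the
vector `A^ℓ 𝟏` is nonnegative and `𝟏ᵀ A^ℓ 𝟏 = ‖A^ℓ 𝟏‖₁`; Hölder's inequality against `𝟏` gives
`‖w‖₁ ‖𝟏‖_p ≤ n ‖w‖_p`, and `‖A^ℓ 𝟏‖_p ≤ B^ℓ ‖𝟏‖_p`, whence `𝟏ᵀ A^ℓ 𝟏 ≤ n B^ℓ`.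
-/

open Finset Matrix

lemma sum_mul_prod_chain {V R : Type*} [Fintype V] [CommSemiring R] (A : Matrix V V R)
    (ℓ : ℕ) (φ : V → R) :
    ∑ v : Fin (ℓ + 1) → V, φ (v 0) * ∏ i : Fin ℓ, A (v i.castSucc) (v i.succ) =
      φ ⬝ᵥ A.mulVec^[ℓ] 1 := by
  induction ℓ generalizing φ with
  | zero =>
    simp only [univ_eq_empty, prod_empty, mul_one, Function.iterate_zero, id_eq,
      dotProduct_one]
    exact Fintype.sum_equiv (Equiv.funUnique (Fin 1) V) _ _ fun _ => rfl
  | succ ℓ ih =>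
    rw [← (Fin.consEquiv fun _ => V).sum_comp, Fintype.sum_prod_type, sum_comm,
      Function.iterate_succ_apply', dotProduct_mulVec, ← ih]
    refine sum_congr rfl fun w _ => ?_
    simp only [Fin.consEquiv_apply, Fin.cons_zero, Fin.prod_univ_succ, Fin.castSucc_zero,
      Fin.cons_succ, ← Fin.succ_castSucc, vecMul, dotProduct, sum_mul, mul_assoc]

lemma iterate_mulVec_nonneg {ι : Type*} [Fintype ι] {A : Matrix ι ι ℝ} (hA : ∀ i j, 0 ≤ A i j)
    {v : ι → ℝ} (hv : 0 ≤ v) (k : ℕ) : 0 ≤ A.mulVec^[k] v := by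
  induction k with
  | zero => exact hv
  | succ k ih =>
    rw [Function.iterate_succ_apply']
    exact fun x => sum_nonneg fun y _ => mul_nonneg (hA x y) (ih y)

section Norms

variable {ι : Type*} [Fintype ι] (p : ℝ≥0∞) [Fact (1 ≤ p)]

lemma vecNorm_pos {v : ι → ℝ} (hv : v ≠ 0) : 0 < vecNorm p v := by
  simpa [vecNorm, norm_pos_iff] using hv

lemma matOpNorm_nonneg (A : Matrix ι ι ℝ) : 0 ≤ matOpNorm p A :=
  Real.sSup_nonneg fun _ ⟨_, _, hc⟩ => hc ▸ div_nonneg (norm_nonneg _) (norm_nonneg _)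

lemma vecNorm_mulVec_le (A : Matrix ι ι ℝ) (v : ι → ℝ) :
    vecNorm p (A *ᵥ v) ≤ matOpNorm p A * vecNorm p v := by
  classical
  let T := LinearMap.toContinuousLinearMap (toLpLin p p A)
  have hT : ∀ w : ι → ℝ, vecNorm p (A *ᵥ w) ≤ ‖T‖ * vecNorm p w :=
    fun w => T.le_opNorm (WithLp.toLp p w)
  rcases eq_or_ne v 0 with rfl | hv
  · simp [vecNorm]
  · have hbdd : BddAbove {c | ∃ w : ι → ℝ, w ≠ 0 ∧ c = vecNorm p (A *ᵥ w) / vecNorm p w} := by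
      refine ⟨‖T‖, ?_⟩
      rintro _ ⟨w, hw, rfl⟩
      exact (div_le_iff₀ (vecNorm_pos p hw)).2 (hT w)
    exact (div_le_iff₀ (vecNorm_pos p hv)).1 (le_csSup hbdd ⟨v, hv, rfl⟩)

lemma vecNorm_iterate_mulVec_le {A : Matrix ι ι ℝ} {B : ℝ} (hB : matOpNorm p A ≤ B)
    (v : ι → ℝ) (k : ℕ) : vecNorm p (A.mulVec^[k] v) ≤ B ^ k * vecNorm p v := by
  have hB0 : 0 ≤ B := (matOpNorm_nonneg p A).trans hB
  induction k with
  | zero => simp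
  | succ k ih =>
    rw [Function.iterate_succ_apply', pow_succ', mul_assoc]
    calc vecNorm p (A *ᵥ A.mulVec^[k] v) ≤ matOpNorm p A * vecNorm p (A.mulVec^[k] v) :=
          vecNorm_mulVec_le p A _
      _ ≤ B * (B ^ k * vecNorm p v) := by gcongr; exact norm_nonneg _

lemma sum_abs_mul_vecNorm_one_le [Nonempty ι] (w : ι → ℝ) :
    (∑ x, |w x|) * vecNorm p (1 : ι → ℝ) ≤ Fintype.card ι * vecNorm p w := by
  set n : ℝ := (Fintype.card ι : ℝ)
  have hone : vecNorm p (1 : ι → ℝ) = n ^ p.toReal⁻¹ := by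
    simpa [vecNorm] using PiLp.norm_toLp_const' (ι := ι) (p := p) (1 : ℝ)
  rcases eq_or_ne p ∞ with rfl | hp
  · have habs : ∀ x, |w x| ≤ vecNorm ∞ w := fun x => PiLp.norm_apply_le (WithLp.toLp ∞ w) x
    simpa [hone] using sum_le_sum fun x (_ : x ∈ univ) => habs x
  set r := p.toReal
  have hr : 1 ≤ r := by simpa using ENNReal.toReal_mono hp (Fact.out : 1 ≤ p)
  have hr0 : 0 < r := one_pos.trans_le hr
  have hn : 0 < n := Nat.cast_pos.2 Fintype.card_pos
  have hw0 : 0 ≤ vecNorm p w := norm_nonneg _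
  have hw : vecNorm p w ^ r = ∑ x, |w x| ^ r := by
    rw [vecNorm, WithLp.equiv_symm_apply, PiLp.norm_eq_sum hr0, one_div,
      Real.rpow_inv_rpow (by positivity) hr0.ne']
    rfl
  rw [hone, ← Real.rpow_le_rpow_iff (by positivity) (by positivity) hr0,
    Real.mul_rpow (by positivity) (by positivity), Real.mul_rpow hn.le hw0, hw,
    Real.rpow_inv_rpow hn.le hr0.ne']
  calc (∑ x, |w x|) ^ r * n ≤ n ^ (r - 1) * (∑ x, |w x| ^ r) * n := by
        gcongr; simpa using Real.rpow_sum_le_const_mul_sum_rpow univ w hr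
    _ = n ^ r * ∑ x, |w x| ^ r := by rw [Real.rpow_sub_one hn.ne']; field_simp

lemma sum_iterate_mulVec_one_le [Nonempty ι] {A : Matrix ι ι ℝ} (hA : ∀ i j, 0 ≤ A i j) {B : ℝ} (hB : matOpNorm p A ≤ B) (k : ℕ) :
    ∑ x, A.mulVec^[k] 1 x ≤ Fintype.card ι * B ^ k := by
  have hone : 0 < vecNorm p (1 : ι → ℝ) := vecNorm_pos p one_ne_zero
  refine le_of_mul_le_mul_right ?_ hone
  calc (∑ x, A.mulVec^[k] 1 x) * vecNorm p 1
      = (∑ x, |A.mulVec^[k] 1 x|) * vecNorm p 1 := by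
        simp only [abs_of_nonneg (iterate_mulVec_nonneg hA zero_le_one k _)]
    _ ≤ Fintype.card ι * vecNorm p (A.mulVec^[k] 1) := sum_abs_mul_vecNorm_one_le p _
    _ ≤ Fintype.card ι * (B ^ k * vecNorm p 1) := by
        gcongr; exact vecNorm_iterate_mulVec_le p hB 1 k
    _ = Fintype.card ι * B ^ k * vecNorm p 1 := by ring

end Norms

section Uniform

variable {Ω κ V : Type*} [MeasurableSpace Ω] {μ : Measure Ω} [Fintype V] [Nonempty V]
  [MeasurableSpace V] [MeasurableSingletonClass V]

lemma map_pi_eq_uniformOfFintype {ι : Type*} [Fintype ι] [DecidableEq ι] {X : κ → Ω → V}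
    (hX : ∀ k, Measurable (X k))
    (hunif : ∀ k, μ.map (X k) = (PMF.uniformOfFintype V).toMeasure)
    (hindep : ∀ (s : Finset κ) (v : κ → V),
      μ (⋂ k ∈ s, {a | X k a = v k}) = ∏ k ∈ s, μ {a | X k a = v k})
    {j : ι → κ} (hj : Function.Injective j) :
    μ.map (fun a i => X (j i) a) = (PMF.uniformOfFintype (ι → V)).toMeasure := by
  classical
  have hY : Measurable fun a i => X (j i) a := measurable_pi_lambda _ fun i => hX (j i)
  have hsingle : ∀ k c, μ {a | X k a = c} = (Fintype.card V : ℝ≥0∞)⁻¹ := fun k c => by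
    rw [← PMF.uniformOfFintype_apply c, ← PMF.toMeasure_apply_singleton _ c
      (measurableSet_singleton c), ← hunif k, Measure.map_apply (hX k) (measurableSet_singleton c)]
    rfl
  refine Measure.ext_of_singleton fun v => ?_
  let v' : κ → V := Function.extend j v fun _ => Classical.arbitrary V
  have hpre : (fun a i => X (j i) a) ⁻¹' {v} = ⋂ k ∈ univ.image j, {a | X k a = v' k} := by
    ext a
    simp [funext_iff, v', hj.extend_apply]
  rw [Measure.map_apply hY (measurableSet_singleton v), hpre, hindep,
    prod_image fun _ _ _ _ h => hj h, PMF.toMeasure_apply_singleton _ v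
    (measurableSet_singleton v), PMF.uniformOfFintype_apply]
  simp [hsingle, ENNReal.inv_pow]

lemma integral_comp_of_map_eq_uniformOfFintype {Y : Ω → V} (hY : Measurable Y)
    (hlaw : μ.map Y = (PMF.uniformOfFintype V).toMeasure) (F : V → ℝ) :
    ∫ a, F (Y a) ∂μ = (∑ v, F v) / Fintype.card V := by
  rw [← integral_map hY.aemeasurable (measurable_of_finite F).aestronglyMeasurable, hlaw,
    PMF.integral_eq_sum]
  simp [PMF.uniformOfFintype_apply, div_eq_inv_mul, mul_sum]

end Uniform

theorem stmt_18_general {V : Type*} [Fintype V] [Nonempty V] [MeasurableSpace V]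
    [MeasurableSingletonClass V]
    {α : Type*} [MeasurableSpace α] (μ : Measure α)
    (m : ℕ) (X : Fin m → α → V) (hX : ∀ i, Measurable (X i))
    (hunif : ∀ i, Measure.map (X i) μ = (PMF.uniformOfFintype V).toMeasure)
    (hindep : ∀ (s : Finset (Fin m)) (v : Fin m → V),
      μ (⋂ i ∈ s, {a | X i a = v i}) = ∏ i ∈ s, μ {a | X i a = v i})
    (A : Matrix V V ℝ) (hA : ∀ i j, 0 ≤ A i j)
    (p : ℝ≥0∞) [Fact (1 ≤ p)] (B : ℝ) (hB : matOpNorm p A ≤ B)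
    (ℓ : ℕ) (j : Fin (ℓ+1) → Fin m) (hj : StrictMono j) :
    ∫ a, ∏ i : Fin ℓ, A (X (j i.castSucc) a) (X (j i.succ) a) ∂μ
      ≤ (B / (Fintype.card V : ℝ))^ℓ := by
  set n : ℝ := (Fintype.card V : ℝ)
  have hn : 0 < n := Nat.cast_pos.2 Fintype.card_pos
  have hlaw := map_pi_eq_uniformOfFintype hX hunif hindep hj.injective
  have hY : Measurable fun a i => X (j i) a := measurable_pi_lambda _ fun i => hX (j i)
  calc ∫ a, ∏ i : Fin ℓ, A (X (j i.castSucc) a) (X (j i.succ) a) ∂μ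
      = (∑ v : Fin (ℓ + 1) → V, ∏ i : Fin ℓ, A (v i.castSucc) (v i.succ)) / n ^ (ℓ + 1) := by
        simp_rw [integral_comp_of_map_eq_uniformOfFintype hY hlaw
          (fun v => ∏ i : Fin ℓ, A (v i.castSucc) (v i.succ)), Fintype.card_fun,
          Fintype.card_fin, Nat.cast_pow, n]
    _ = (∑ x, A.mulVec^[ℓ] 1 x) / n ^ (ℓ + 1) := by
        rw [← one_dotProduct (A.mulVec^[ℓ] 1), ← sum_mul_prod_chain]
        simp only [Pi.one_apply, one_mul]
    _ ≤ n * B ^ ℓ / n ^ (ℓ + 1) := by gcongr; exact sum_iterate_mulVec_one_le p hA hB ℓ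
    _ = (B / n) ^ ℓ := by rw [div_pow, pow_succ]; field_simp

/-- For i.i.d. uniform `V_1, …, V_m` and a nonnegative matrix `A` with `ℓ_p` operator
norm at most `B`, the expectation of a product of `ℓ` matrix entries along a chain
of `ℓ+1` increasing indices is at most `(B/n)^ℓ`. -/
theorem stmt_18 {V : Type*} [Fintype V] [Nonempty V] [MeasurableSpace V]
    [MeasurableSingletonClass V]
    {α : Type*} [MeasurableSpace α] (μ : Measure α) [IsProbabilityMeasure μ]
    (m : ℕ) (X : Fin m → α → V) (hX : ∀ i, Measurable (X i))
    (hunif : ∀ i, Measure.map (X i) μ = (PMF.uniformOfFintype V).toMeasure)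
    (hindep : ∀ (s : Finset (Fin m)) (v : Fin m → V),
      μ (⋂ i ∈ s, {a | X i a = v i}) = ∏ i ∈ s, μ {a | X i a = v i})
    (A : Matrix V V ℝ) (hA : ∀ i j, 0 ≤ A i j)
    (p : ℝ≥0∞) [Fact (1 ≤ p)] (B : ℝ) (hB : matOpNorm p A ≤ B)
    (ℓ : ℕ) (j : Fin (ℓ+1) → Fin m) (hj : StrictMono j) :
    ∫ a, ∏ i : Fin ℓ, A (X (j i.castSucc) a) (X (j i.succ) a) ∂μ
      ≤ (B / (Fintype.card V : ℝ))^ℓ :=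
  stmt_18_general μ m X hX hunif hindep A hA p B hB ℓ j hj
end
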